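/- Let G be a K4-free graph on n ≥ 1 vertices with e edges. Then G contains a bipartite subgraph with at least 2e/7 + 8e^2/(7n^2) edges, i.e., b(G) ≥ 2e/7 + 8e^2/(7n^2). -/

import Mathlib

open Finset

namespace SimpleGraph

variable {V : Type*} [Fintype V] [DecidableEq V] (G : SimpleGraph V) [DecidableRel G.Adj]

/-- The number of edges of `G` crossing the cut `(S, Sᶜ)`. -/
def cutSize (S : Finset V) : ℕ :=
  ((S ×ˢ Sᶜ).filter fun p => G.Adj p.1 p.2).card

/-- `b(G)`: the maximum number of edges in a bipartite subgraph of `G`,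
equivalently the maximum over vertex subsets `S` of the number of edges
between `S` and its complement. -/
def maxCut : ℕ := Finset.univ.sup fun S : Finset V => G.cutSize S

/-- The number of edges of `G` with both endpoints in `S`. -/
def spanEdges (S : Finset V) : ℕ :=
  (G.edgeFinset.filter fun e => e ∈ S.sym2).card

end SimpleGraph

/-!
Write `E(A, B)` for the number of ordered adjacent pairs in `A × B`, and fix a vertex `v` with
neighbourhood `N` and degree `d`. Cutting `N` off gives `∑_{u ∈ N} deg u ≤ b + E(N, N)`. For a
neighbour `u` of `v` the set `X = N ∩ N(u)` is independent because `G` is `K₄`-free; the cuts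
`X ∪ R` with `R ⊆ V \ N` show `2e + 4 E(X, N \ X) ≤ 4b + E(N, N)`, and choosing `u` by
Cauchy–Schwarz gives `E(N, N)² ≤ d² E(X, N \ X)`. Eliminating `E(N, N)` yields
`2e + 3 ∑_{u ∈ N} deg u ≤ 7b + d²`. Summed over `v`, both degree sums become `∑ deg²`, which is at
least `4e²/n`.
-/

namespace SimpleGraph

variable {V : Type*} {G : SimpleGraph V} [DecidableRel G.Adj]

theorem card_interedges_comm (s t : Finset V) :
    #(G.interedges s t) = #(G.interedges t s) :=
  have := G.symm
  Rel.card_interedges_comm s t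

theorem sq_two_mul_card_edgeFinset_le [Fintype V] :
    (2 * #G.edgeFinset) ^ 2 ≤ Fintype.card V * ∑ v, G.degree v ^ 2 := by
  rw [← sum_degrees_eq_twice_card_edges]
  exact sq_sum_le_card_mul_sum_sq

variable [DecidableEq V] {s₁ s₂ t₁ t₂ : Finset V}

theorem card_interedges_union_left (h : Disjoint s₁ s₂) (t : Finset V) :
    #(G.interedges (s₁ ∪ s₂) t) = #(G.interedges s₁ t) + #(G.interedges s₂ t) := by
  rw [← card_union_of_disjoint (G.interedges_disjoint_left h t)]
  congr 1
  ext
  simp only [mem_union, mem_interedges_iff]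
  tauto

theorem card_interedges_union_right (s : Finset V) (h : Disjoint t₁ t₂) :
    #(G.interedges s (t₁ ∪ t₂)) = #(G.interedges s t₁) + #(G.interedges s t₂) := by
  rw [card_interedges_comm, card_interedges_union_left h, card_interedges_comm t₁,
    card_interedges_comm t₂]

theorem card_interedges_add_card_interedges_sdiff_left (h : s₁ ⊆ s₂) (t : Finset V) :
    #(G.interedges s₁ t) + #(G.interedges (s₂ \ s₁) t) = #(G.interedges s₂ t) := by
  rw [← card_interedges_union_left disjoint_sdiff, union_sdiff_of_subset h]

theorem card_interedges_add_card_interedges_sdiff_right (s : Finset V) (h : t₁ ⊆ t₂) :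
    #(G.interedges s t₁) + #(G.interedges s (t₂ \ t₁)) = #(G.interedges s t₂) := by
  rw [← card_interedges_union_right s disjoint_sdiff, union_sdiff_of_subset h]

/-- Greedy derandomisation of the fact that a uniformly random `R ⊆ Z` cuts half of the edges
inside `Z`. -/
theorem exists_subset_card_interedges_le_four_mul (Z : Finset V) :
    ∃ R ⊆ Z, #(G.interedges Z Z) ≤ 4 * #(G.interedges R (Z \ R)) := by
  induction Z using Finset.induction_on with
  | empty => exact ⟨∅, subset_rfl, by simp⟩
  | insert z Z hz ih =>
    obtain ⟨R, hRZ, hR⟩ := ih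
    have hzR : z ∉ R := fun h => hz (hRZ h)
    have hzZ : Disjoint {z} Z := disjoint_singleton_left.2 hz
    have hsplit : #(G.interedges {z} Z) =
        #(G.interedges {z} R) + #(G.interedges {z} (Z \ R)) :=
      (G.card_interedges_add_card_interedges_sdiff_right {z} hRZ).symm
    have hloop : G.interedges {z} {z} = ∅ := by
      ext ⟨x, y⟩
      simp only [mem_interedges_iff, mem_singleton, notMem_empty, iff_false]
      rintro ⟨rfl, rfl, h⟩
      exact h.ne rfl
    have hins : #(G.interedges (insert z Z) (insert z Z)) =
        #(G.interedges Z Z) + 2 * #(G.interedges {z} Z) := by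
      rw [insert_eq, card_interedges_union_left hzZ, card_interedges_union_right _ hzZ,
        card_interedges_union_right _ hzZ, hloop, card_empty, card_interedges_comm Z {z}]
      ring
    -- put `z` on the side opposite to the majority of its neighbours in `Z`
    rcases le_total #(G.interedges {z} (Z \ R)) #(G.interedges {z} R) with h | h
    · refine ⟨R, hRZ.trans (subset_insert z Z), ?_⟩
      rw [hins, insert_sdiff_of_notMem _ hzR, insert_eq z (Z \ R),
        card_interedges_union_right _ (disjoint_singleton_left.2 fun h => hz (mem_sdiff.1 h).1),
        card_interedges_comm R]
      omega
    · refine ⟨insert z R, insert_subset_insert z hRZ, ?_⟩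
      rw [hins, insert_sdiff_insert, sdiff_insert_of_notMem hz, insert_eq z R,
        card_interedges_union_left (disjoint_singleton_left.2 hzR)]
      omega

variable [Fintype V]

theorem card_interedges_eq_sum (s t : Finset V) :
    #(G.interedges s t) = ∑ a ∈ s, #(G.neighborFinset a ∩ t) := by
  rw [interedges_def, card_eq_sum_card_fiberwise fun p hp => (mem_product.1 (mem_filter.1 hp).1).1]
  refine sum_congr rfl fun a _ => ?_
  rw [← card_map (s := G.neighborFinset a ∩ t) ⟨Prod.mk a, Prod.mk_right_injective a⟩]
  apply congrArg card
  ext ⟨x, y⟩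
  simp only [mem_filter, mem_product, mem_map, mem_inter, mem_neighborFinset]
  aesop

theorem card_interedges_univ_right (s : Finset V) :
    #(G.interedges s univ) = ∑ a ∈ s, G.degree a := by
  simp [card_interedges_eq_sum]

theorem card_interedges_univ_univ : #(G.interedges univ univ) = 2 * #G.edgeFinset := by
  rw [card_interedges_univ_right, sum_degrees_eq_twice_card_edges]

theorem sum_sum_neighborFinset_inter {M : Type*} [AddCommMonoid M] (s t : Finset V) (f : V → M) :
    ∑ u ∈ s, ∑ w ∈ G.neighborFinset u ∩ t, f w = ∑ w ∈ t, #(G.neighborFinset w ∩ s) • f w := by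
  rw [sum_comm' (t' := t) (s' := fun w => G.neighborFinset w ∩ s)]
  · simp_rw [sum_const]
  · simp only [mem_inter, mem_neighborFinset, G.adj_comm]
    tauto

theorem cutSize_le_maxCut (S : Finset V) : G.cutSize S ≤ G.maxCut :=
  le_sup (mem_univ S)

theorem sum_degree_le_maxCut_add (s : Finset V) :
    ∑ a ∈ s, G.degree a ≤ G.maxCut + #(G.interedges s s) := by
  rw [← card_interedges_univ_right, ← union_compl s,
    card_interedges_union_right s disjoint_compl_right, add_comm]
  exact Nat.add_le_add_right (G.cutSize_le_maxCut s) _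

theorem cutSize_union {A S R : Finset V} (hS : S ⊆ A) (hR : R ⊆ Aᶜ) :
    G.cutSize (S ∪ R) = #(G.interedges S (A \ S)) + #(G.interedges S (Aᶜ \ R)) +
      #(G.interedges R (A \ S)) + #(G.interedges R (Aᶜ \ R)) := by
  have hSR : Disjoint S R := disjoint_compl_right.mono hS hR
  have hcompl : (S ∪ R)ᶜ = (A \ S) ∪ (Aᶜ \ R) := by
    ext a
    have haS := @hS a
    have haR := @hR a
    simp only [mem_compl, mem_union, mem_sdiff] at *
    tauto
  have hdisj : Disjoint (A \ S) (Aᶜ \ R) := disjoint_compl_right.mono sdiff_subset sdiff_subset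
  rw [cutSize, ← interedges_def, hcompl, card_interedges_union_left hSR,
    card_interedges_union_right _ hdisj, card_interedges_union_right _ hdisj]
  ring

theorem card_interedges_univ_add_le_maxCut {A S : Finset V} (hS : S ⊆ A) :
    #(G.interedges univ univ) + 4 * #(G.interedges S (A \ S)) ≤
      4 * G.maxCut + #(G.interedges A A) := by
  obtain ⟨R, hRZ, hR⟩ := G.exists_subset_card_interedges_le_four_mul Aᶜ
  -- the two cuts `S ∪ R` and `S ∪ (Aᶜ \ R)` together cross each edge between `S` and `A \ S`
  -- twice, each edge between `A` and `Aᶜ` once, and each edge of `Aᶜ` cut by `R` twice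
  have h₁ := G.cutSize_le_maxCut (S ∪ R)
  have h₂ := G.cutSize_le_maxCut (S ∪ (Aᶜ \ R))
  rw [cutSize_union hS hRZ] at h₁
  rw [cutSize_union hS sdiff_subset, Finset.sdiff_sdiff_eq_self hRZ] at h₂
  have e₁ := G.card_interedges_add_card_interedges_sdiff_left (subset_univ A) univ
  have e₂ := G.card_interedges_add_card_interedges_sdiff_right A (subset_univ A)
  have e₃ := G.card_interedges_add_card_interedges_sdiff_right Aᶜ (subset_univ A)
  have e₄ := G.card_interedges_add_card_interedges_sdiff_left hS Aᶜ
  have e₅ := G.card_interedges_add_card_interedges_sdiff_right S hRZ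
  have e₆ := G.card_interedges_add_card_interedges_sdiff_left hRZ (A \ S)
  rw [← compl_eq_univ_sdiff] at e₁ e₂ e₃
  have c₁ := G.card_interedges_comm Aᶜ A
  have c₂ := G.card_interedges_comm Aᶜ S
  have c₃ := G.card_interedges_comm (A \ S) Aᶜ
  have c₄ := G.card_interedges_comm (Aᶜ \ R) R
  omega

theorem interedges_neighborFinset_inter_eq_empty (hG : G.CliqueFree 4) {u v : V}
    (huv : G.Adj u v) :
    G.interedges (G.neighborFinset u ∩ G.neighborFinset v)
      (G.neighborFinset u ∩ G.neighborFinset v) = ∅ := by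
  refine eq_empty_of_forall_notMem fun ⟨x, y⟩ hxy => ?_
  simp only [mem_interedges_iff, mem_inter, mem_neighborFinset] at hxy
  obtain ⟨⟨hux, hvx⟩, ⟨huy, hvy⟩, hxy⟩ := hxy
  exact hG (insert u {v, x, y})
    ((is3Clique_triple_iff.2 ⟨hvx, hvy, hxy⟩).insert (by simp [hux, huy, huv]))

theorem exists_sq_card_interedges_le {s : Finset V} (hs : s.Nonempty) :
    ∃ u ∈ s, #(G.interedges s s) ^ 2 ≤ #s ^ 2 * #(G.interedges (G.neighborFinset u ∩ s) s) := by
  obtain ⟨u, hu, hmax⟩ :=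
    s.exists_max_image (fun u => #(G.interedges (G.neighborFinset u ∩ s) s)) hs
  refine ⟨u, hu, ?_⟩
  calc #(G.interedges s s) ^ 2 = (∑ w ∈ s, #(G.neighborFinset w ∩ s)) ^ 2 := by
        rw [card_interedges_eq_sum]
    _ ≤ #s * ∑ w ∈ s, #(G.neighborFinset w ∩ s) ^ 2 := sq_sum_le_card_mul_sum_sq
    _ = #s * ∑ u ∈ s, #(G.interedges (G.neighborFinset u ∩ s) s) := by
        simp_rw [card_interedges_eq_sum, sum_sum_neighborFinset_inter, smul_eq_mul, sq]
    _ ≤ #s * (#s * #(G.interedges (G.neighborFinset u ∩ s) s)) := by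
        gcongr
        simpa using sum_le_card_nsmul s _ _ hmax
    _ = #s ^ 2 * #(G.interedges (G.neighborFinset u ∩ s) s) := by ring

theorem two_mul_card_edgeFinset_add_three_mul_sum_degree_le (hG : G.CliqueFree 4) (v : V) :
    2 * #G.edgeFinset + 3 * ∑ u ∈ G.neighborFinset v, G.degree u ≤
      7 * G.maxCut + G.degree v ^ 2 := by
  set N := G.neighborFinset v
  have hD : #N = G.degree v := G.card_neighborFinset_eq_degree v
  obtain ⟨X, hXN, hS⟩ : ∃ X ⊆ N,
      #(G.interedges N N) ^ 2 ≤ G.degree v ^ 2 * #(G.interedges X (N \ X)) := by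
    rcases N.eq_empty_or_nonempty with hN | hN
    · exact ⟨∅, empty_subset _, by simp [hN]⟩
    obtain ⟨u, hu, hSu⟩ := G.exists_sq_card_interedges_le hN
    refine ⟨G.neighborFinset u ∩ N, inter_subset_right, ?_⟩
    have hX := G.interedges_neighborFinset_inter_eq_empty hG ((G.mem_neighborFinset v u).1 hu).symm
    rwa [hD, ← G.card_interedges_add_card_interedges_sdiff_right (G.neighborFinset u ∩ N)
      inter_subset_right, hX, card_empty, zero_add] at hSu
  have hT := G.sum_degree_le_maxCut_add N
  have hcut := G.card_interedges_univ_add_le_maxCut hXN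
  rw [card_interedges_univ_univ] at hcut
  have hSD : #(G.interedges N N) ≤ G.degree v ^ 2 := by
    simpa [sq, hD] using G.card_interedges_le_mul N N
  have key : 4 * #(G.interedges N N) ≤ G.degree v ^ 2 + 4 * #(G.interedges X (N \ X)) := by
    rcases Nat.eq_zero_or_pos (G.degree v ^ 2) with h0 | hpos
    · omega
    refine Nat.le_of_mul_le_mul_left ?_ hpos
    zify at hS ⊢
    nlinarith [sq_nonneg ((G.degree v : ℤ) ^ 2 - 2 * #(G.interedges N N))]
  omega

theorem card_mul_card_edgeFinset_add_sum_degree_sq_le (hG : G.CliqueFree 4) :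
    2 * Fintype.card V * #G.edgeFinset + 2 * ∑ v, G.degree v ^ 2 ≤
      7 * Fintype.card V * G.maxCut := by
  have h := sum_le_sum fun v (_ : v ∈ univ) =>
    G.two_mul_card_edgeFinset_add_three_mul_sum_degree_le hG v
  have hQ : ∑ v, ∑ u ∈ G.neighborFinset v, G.degree u = ∑ v, G.degree v ^ 2 := by
    simpa [sq] using G.sum_sum_neighborFinset_inter univ univ fun v => G.degree v
  simp only [sum_add_distrib, ← mul_sum, hQ, sum_const, card_univ, smul_eq_mul] at h
  linarith

end SimpleGraph

theorem K4_free_max_cut_lower_bound_general {V : Type*} [Fintype V] [DecidableEq V]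
    (G : SimpleGraph V) [DecidableRel G.Adj] (hG : G.CliqueFree 4) :
    2 * (G.edgeFinset.card : ℝ) / 7 +
      8 * (G.edgeFinset.card : ℝ) ^ 2 / (7 * (Fintype.card V : ℝ) ^ 2) ≤ G.maxCut := by
  have hsum := G.card_mul_card_edgeFinset_add_sum_degree_sq_le hG
  have hcs := G.sq_two_mul_card_edgeFinset_le
  set n := Fintype.card V
  set m := #G.edgeFinset
  set b := G.maxCut
  set Q := ∑ v, G.degree v ^ 2
  have key : 2 * (m : ℝ) * n ^ 2 + 8 * (m : ℝ) ^ 2 ≤ 7 * b * n ^ 2 := by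
    have h₁ : 2 * (n : ℝ) * m + 2 * Q ≤ 7 * n * b := by exact_mod_cast hsum
    have h₂ : (2 * (m : ℝ)) ^ 2 ≤ n * Q := by exact_mod_cast hcs
    nlinarith
  rcases eq_or_ne (n : ℝ) 0 with hn | hn
  · have hm : (m : ℝ) = 0 := by
      rw [hn] at key
      nlinarith
    simp [hm]
  · rw [div_add_div _ _ (by norm_num) (by positivity), div_le_iff₀ (by positivity)]
    nlinarith

/-- A `K₄`-free graph on `n ≥ 1` vertices with `e` edges contains a bipartite subgraph
with at least `2e/7 + 8e²/(7n²)` edges. -/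
theorem K4_free_max_cut_lower_bound {V : Type*} [Fintype V] [DecidableEq V]
    (G : SimpleGraph V) [DecidableRel G.Adj] (hG : G.CliqueFree 4)
    (hn : 1 ≤ Fintype.card V) :
    2 * (G.edgeFinset.card : ℝ) / 7 +
      8 * (G.edgeFinset.card : ℝ) ^ 2 / (7 * (Fintype.card V : ℝ) ^ 2) ≤ G.maxCut :=
  K4_free_max_cut_lower_bound_general G hG
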